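/- Let c be a GBSC code for (𝒳, p). Then the expected code length of c is at most that of the Shannon code: L(c) = ∑_{x∈𝒳} p(x)·|c(x)| ≤ ∑_{x∈𝒳} p(x)·⌈−log₂ p(x)⌉. That is, GBSC is at least as good as Shannon coding. -/

import Mathlib

/-!
Along the path to `c x`, twice the mass of a child of a greedy split is at most the mass of its
parent plus that of any one symbol `y` of the child: otherwise moving `y` to the sibling would
give a better balanced partition. Iterating this from the leaf upwards, a codeword of length `n + 1`
forces `2 ^ n * p x + p y ≤ 1` for some symbol `y`, hence `2 ^ (n + 1) * p x < 2`, which is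
`n + 1 ≤ ⌈-log₂ p x⌉`.
-/

open Finset

/-- The set of symbols of `X` whose codeword (under `c`) has `w` as a prefix. -/
def codeS {α : Type*} [DecidableEq α] (X : Finset α) (c : α → List Bool)
    (w : List Bool) : Finset α :=
  X.filter fun x => w <+: c x

/-- The total probability of the symbols of `X` whose codeword has `w` as a prefix. -/
def codeP {α : Type*} [DecidableEq α] (X : Finset α) (p : α → ℝ) (c : α → List Bool)
    (w : List Bool) : ℝ :=
  ∑ x ∈ codeS X c w, p x

/-- `c` is a binary prefix code on `X`: it is injective on `X` and no codeword is a
(proper) prefix of another codeword. -/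
def IsPrefixCode {α : Type*} [DecidableEq α] (X : Finset α) (c : α → List Bool) : Prop :=
  Set.InjOn c X ∧ ∀ x ∈ X, ∀ y ∈ X, x ≠ y → ¬ (c x <+: c y)

/-- `c` is a greedy binary separation code (GBSC code) for `(X, p)`:
it is a prefix code on `X`; whenever `S(w)` is a singleton `{x}`, then `c x = w`; and
whenever `|S(w)| ≥ 2`, the probability split `|P(w0) - P(w1)|` is at most the imbalance of
every binary partition of `S(w)`. -/
def IsGBSC {α : Type*} [DecidableEq α] (X : Finset α) (p : α → ℝ)
    (c : α → List Bool) : Prop :=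
  IsPrefixCode X c ∧
  (∀ w : List Bool, ∀ x ∈ X, codeS X c w = {x} → c x = w) ∧
  (∀ w : List Bool, 2 ≤ (codeS X c w).card →
    ∀ A B : Finset α, Disjoint A B → A ∪ B = codeS X c w →
      |codeP X p c (w ++ [false]) - codeP X p c (w ++ [true])| ≤
        |(∑ x ∈ A, p x) - ∑ x ∈ B, p x|)

lemma le_of_abs_le_abs_sub_two_mul {a q : ℝ} (hq : 0 < q) (h : |a| ≤ |a - 2 * q|) :
    a ≤ q := by
  nlinarith [sq_le_sq.2 h]

lemma le_ceil_neg_logb_two_of_two_pow_mul_lt {q : ℝ} (hq : 0 < q) {n : ℕ}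
    (h : 2 ^ n * q < 2) : (n : ℤ) ≤ ⌈-Real.logb 2 q⌉ := by
  rw [Int.le_ceil_iff, lt_neg, Real.logb_lt_iff_lt_rpow one_lt_two hq, neg_sub,
    Real.rpow_sub two_pos, Real.rpow_one, Int.cast_natCast, Real.rpow_natCast,
    lt_div_iff₀ (by positivity)]
  linarith

section GBSC

variable {α : Type*} [DecidableEq α] {X : Finset α} {p : α → ℝ} {c : α → List Bool}

lemma mem_codeS {w : List Bool} {x : α} : x ∈ codeS X c w ↔ x ∈ X ∧ w <+: c x :=
  mem_filter

lemma codeS_nil : codeS X c [] = X :=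
  filter_true_of_mem fun _ _ => List.nil_prefix

lemma codeS_append_subset (w : List Bool) (b : Bool) : codeS X c (w ++ [b]) ⊆ codeS X c w :=
  fun _ hx =>
    mem_codeS.2 ⟨(mem_codeS.1 hx).1, (List.prefix_append w [b]).trans (mem_codeS.1 hx).2⟩

lemma disjoint_codeS_append_not (w : List Bool) (b : Bool) :
    Disjoint (codeS X c (w ++ [b])) (codeS X c (w ++ [!b])) := by
  refine disjoint_left.2 fun z hb hnb => ?_
  have hlen : (w ++ [b]).length = (w ++ [!b]).length := by simp
  rcases List.prefix_or_prefix_of_prefix (mem_codeS.1 hb).2 (mem_codeS.1 hnb).2 with h | h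
  · simpa using h.eq_of_length hlen
  · simpa using h.eq_of_length hlen.symm

lemma IsPrefixCode.codeS_append_union_append_not (hc : IsPrefixCode X c) {w : List Bool}
    (hcard : 2 ≤ (codeS X c w).card) (b : Bool) :
    codeS X c (w ++ [b]) ∪ codeS X c (w ++ [!b]) = codeS X c w := by
  refine Subset.antisymm (union_subset (codeS_append_subset w b) (codeS_append_subset w !b))
    fun z hz => ?_
  obtain ⟨hzX, t, ht⟩ := mem_codeS.1 hz
  rcases t with _ | ⟨b', t⟩
  · -- `c z = w` would be a proper prefix of the codeword of another symbol of `S(w)`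
    obtain ⟨u, hu, hne⟩ := exists_mem_ne (by omega : 1 < (codeS X c w).card) z
    simp only [List.append_nil] at ht
    exact absurd (ht ▸ (mem_codeS.1 hu).2) (hc.2 z hzX u (mem_codeS.1 hu).1 hne.symm)
  · have hb' : w ++ [b'] <+: c z := ⟨t, by simp [← ht]⟩
    rcases Bool.eq_or_eq_not b' b with rfl | rfl
    · exact mem_union_left _ (mem_codeS.2 ⟨hzX, hb'⟩)
    · exact mem_union_right _ (mem_codeS.2 ⟨hzX, hb'⟩)

lemma IsGBSC.two_le_card_codeS_take (hc : IsGBSC X p c) {x : α} (hx : x ∈ X) {k : ℕ}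
    (hk : k < (c x).length) : 2 ≤ (codeS X c ((c x).take k)).card := by
  have hxS : x ∈ codeS X c ((c x).take k) := mem_codeS.2 ⟨hx, List.take_prefix k _⟩
  by_contra! hlt
  have hsingle : codeS X c ((c x).take k) = {x} :=
    eq_singleton_iff_unique_mem.2 ⟨hxS, fun z hz => card_le_one.1 (by omega) z hz x hxS⟩
  have := congrArg List.length (hc.2.1 _ x hx hsingle)
  simp only [List.length_take] at this
  omega

lemma IsGBSC.two_mul_codeP_append_le (hp : ∀ x ∈ X, 0 < p x) (hc : IsGBSC X p c)
    {w : List Bool} (hcard : 2 ≤ (codeS X c w).card) {b : Bool} {y : α}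
    (hy : y ∈ codeS X c (w ++ [b])) :
    2 * codeP X p c (w ++ [b]) ≤ codeP X p c w + p y := by
  set T := codeS X c (w ++ [b])
  set U := codeS X c (w ++ [!b])
  have hTU : Disjoint T U := disjoint_codeS_append_not w b
  have hunion : T ∪ U = codeS X c w := hc.1.codeS_append_union_append_not hcard b
  have hyU : y ∉ U := disjoint_left.1 hTU hy
  have hsplit : codeP X p c w = codeP X p c (w ++ [b]) + codeP X p c (w ++ [!b]) := by
    rw [codeP, ← hunion, sum_union hTU]; rfl
  have hgreedy := hc.2.2 w hcard (T.erase y) (insert y U)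
    (disjoint_insert_right.2 ⟨notMem_erase y T, disjoint_of_subset_left (erase_subset y T) hTU⟩)
    (by rw [union_insert, ← insert_union, insert_erase hy, hunion])
  have hsides : |codeP X p c (w ++ [false]) - codeP X p c (w ++ [true])| =
      |codeP X p c (w ++ [b]) - codeP X p c (w ++ [!b])| := by
    cases b
    · rfl
    · exact abs_sub_comm _ _
  have hmoved : ∑ x ∈ T.erase y, p x - (p y + ∑ x ∈ U, p x) =
      codeP X p c (w ++ [b]) - codeP X p c (w ++ [!b]) - 2 * p y := by
    change _ = ∑ x ∈ T, p x - ∑ x ∈ U, p x - _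
    rw [← add_sum_erase T p hy]
    ring
  rw [hsides, sum_insert hyU, hmoved] at hgreedy
  linarith [le_of_abs_le_abs_sub_two_mul (hp y (filter_subset _ _ hy)) hgreedy]

lemma IsGBSC.exists_two_pow_mul_add_le_codeP_take (hp : ∀ x ∈ X, 0 < p x) (hc : IsGBSC X p c)
    {x : α} (hx : x ∈ X) (r : ℕ) {k : ℕ} (hk : k + r + 1 = (c x).length) :
    ∃ y ∈ codeS X c ((c x).take k), 2 ^ r * p x + p y ≤ codeP X p c ((c x).take k) := by
  induction r generalizing k with
  | zero =>
    have hxS : x ∈ codeS X c ((c x).take k) := mem_codeS.2 ⟨hx, List.take_prefix k _⟩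
    obtain ⟨y, hy, hyx⟩ :=
      exists_mem_ne (hc.two_le_card_codeS_take hx (by omega : k < (c x).length)) x
    refine ⟨y, hy, ?_⟩
    rw [pow_zero, one_mul]
    exact add_le_sum (fun z hz => (hp z (filter_subset _ _ hz)).le) hxS hy hyx.symm
  | succ r ih =>
    obtain ⟨y, hy, hle⟩ := ih (k := k + 1) (by omega)
    have hkx : k < (c x).length := by omega
    rw [List.take_succ_eq_append_getElem hkx] at hy hle
    have hhalf := hc.two_mul_codeP_append_le hp (hc.two_le_card_codeS_take hx hkx) hy
    exact ⟨y, codeS_append_subset _ _ hy, by rw [pow_succ]; linarith⟩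

lemma IsGBSC.two_pow_length_mul_lt (hp : ∀ x ∈ X, 0 < p x) (hc : IsGBSC X p c) {x : α}
    (hx : x ∈ X) : 2 ^ (c x).length * p x < 2 * ∑ z ∈ X, p z := by
  have hle : p x ≤ ∑ z ∈ X, p z := single_le_sum (fun z hz => (hp z hz).le) hx
  rcases hlen : (c x).length with _ | n
  · linarith [hp x hx]
  · obtain ⟨y, hy, hroot⟩ :=
      hc.exists_two_pow_mul_add_le_codeP_take hp hx n (k := 0) (by omega)
    rw [List.take_zero, codeP, codeS_nil] at hroot
    rw [pow_succ]
    linarith [hp y (filter_subset _ _ hy)]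

end GBSC

theorem gbsc_le_shannon_general {α : Type*} [DecidableEq α]
    (X : Finset α) (p : α → ℝ)
    (hp : ∀ x ∈ X, 0 < p x) (hsum : ∑ x ∈ X, p x = 1)
    (c : α → List Bool) (hc : IsGBSC X p c) :
    ∑ x ∈ X, p x * ((c x).length : ℝ) ≤
      ∑ x ∈ X, p x * ((⌈-Real.logb 2 (p x)⌉ : ℤ) : ℝ) := by
  refine sum_le_sum fun x hx => mul_le_mul_of_nonneg_left ?_ (hp x hx).le
  have hlt := hc.two_pow_length_mul_lt hp hx
  rw [hsum, mul_one] at hlt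
  exact_mod_cast le_ceil_neg_logb_two_of_two_pow_mul_lt (hp x hx) hlt

/-- GBSC is at least as good as Shannon coding: the expected code length of a GBSC code is
at most `∑ p x * ⌈-log₂ (p x)⌉`, the expected length of the Shannon code. -/
theorem gbsc_le_shannon {α : Type*} [DecidableEq α]
    (X : Finset α) (hX : X.Nonempty) (p : α → ℝ)
    (hp : ∀ x ∈ X, 0 < p x) (hsum : ∑ x ∈ X, p x = 1)
    (c : α → List Bool) (hc : IsGBSC X p c) :
    ∑ x ∈ X, p x * ((c x).length : ℝ) ≤
      ∑ x ∈ X, p x * ((⌈-Real.logb 2 (p x)⌉ : ℤ) : ℝ) :=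
  gbsc_le_shannon_general X p hp hsum c hc
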